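/- Let d₁,…,d_p be positive numbers with D = diag(d₁,…,d_p), let λ₁ ≥ … ≥ λ_p ≥ 0, and for y ∈ ℝ^p let b*(y) be the unique minimizer of f(b) = ½‖y − Db‖₂² + J_λ(b) over ℝ^p, and let R(b*(y)) denote the number of nonzero entries of b*(y). Then for every index i ∈ {1,…,p} and every integer r ≥ 1, the set of y ∈ ℝ^p such that (b*(y))_i ≠ 0 and R(b*(y)) = r is equal to the set of y ∈ ℝ^p such that d_i|y_i| > λ_r and R(b*(y)) = r. -/

import Mathlib

/-- The nonincreasing rearrangement of the absolute values of the coordinates of `b`. -/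
noncomputable def sortedAbs {p : ℕ} (b : Fin p → ℝ) : Fin p → ℝ :=
  fun i => |b (Tuple.sort (fun j => |b j|) (Fin.rev i))|

/-- The sorted ℓ₁ norm `J_λ(b) = Σ_i λ_i |b|_{(i)}`. -/
noncomputable def Jlam {p : ℕ} (lam b : Fin p → ℝ) : ℝ :=
  ∑ i, lam i * sortedAbs b i

/-- The SLOPE objective with diagonal design matrix `D = diag(d₁,…,d_p)`:
`f(b) = ½ ‖y − D b‖₂² + J_λ(b)`. -/
noncomputable def slopeObj {p : ℕ} (d y lam : Fin p → ℝ) (b : Fin p → ℝ) : ℝ :=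
  (1 / 2) * ∑ i, (y i - d i * b i) ^ 2 + Jlam lam b

/-!
Write the objective as a sum of one-dimensional costs `½ (y_k - d_k x)² + λ_{π(k)} |x|`, where
`π(k)` is the rank of `|b_k|` in the nonincreasing rearrangement. By the rearrangement inequality
any other assignment of the weights gives a smaller sum, so changing only coordinate `i` of `b`
to `a` raises the objective by at most the change of the cost of coordinate `i`, evaluated at the
weight `λ_{π'(i)}` it gets in the modified vector. Let `b` be the minimizer, with `R` nonzero
entries. If `b_i ≠ 0`, halving it keeps the support, so `π'(i) ≤ R` and
`λ_{π'(i)} ≥ λ_R`; were `d_i |y_i| ≤ λ_R`, halving would lower the cost. If `b_i = 0`, a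
small entry of the sign of `y_i` ranks behind the whole support, so `λ_{π'(i)} ≤ λ_R`; were
`λ_R < d_i |y_i|`, that entry would lower the cost.
-/

open Function Filter Topology

namespace Slope

variable {p : ℕ}

noncomputable def sortPerm (b : Fin p → ℝ) : Equiv.Perm (Fin p) :=
  (Tuple.sort fun j => |b j|).symm.trans Fin.revPerm

@[simp]
lemma sortedAbs_sortPerm (b : Fin p → ℝ) (i : Fin p) : sortedAbs b (sortPerm b i) = |b i| := by
  simp [sortedAbs, sortPerm]

lemma sortedAbs_antitone (b : Fin p → ℝ) : Antitone (sortedAbs b) :=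
  (Tuple.monotone_sort fun j => |b j|).comp_antitone Fin.rev_anti

lemma Jlam_eq_sum_sortPerm (lam b : Fin p → ℝ) :
    Jlam lam b = ∑ i, lam (sortPerm b i) * |b i| := by
  rw [Jlam, ← Equiv.sum_comp (sortPerm b)]
  simp

lemma sum_perm_mul_abs_le_Jlam {lam : Fin p → ℝ} (hlam : Antitone lam) (b : Fin p → ℝ)
    (τ : Equiv.Perm (Fin p)) : ∑ i, lam (τ i) * |b i| ≤ Jlam lam b :=
  calc ∑ i, lam (τ i) * |b i| = ∑ k, lam k * sortedAbs b ((τ.symm.trans (sortPerm b)) k) := by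
        rw [← Equiv.sum_comp τ.symm]; simp
    _ ≤ ∑ k, lam k * sortedAbs b k :=
        (hlam.monovary (sortedAbs_antitone b)).sum_mul_comp_perm_le_sum_mul
    _ = Jlam lam b := rfl

lemma sortPerm_lt_ncard_support {b : Fin p → ℝ} {i : Fin p} (hi : b i ≠ 0) :
    (sortPerm b i : ℕ) < (support b).ncard := by
  have hle : (Set.Iic (sortPerm b i)).ncard ≤ (support b).ncard := by
    refine Set.ncard_le_ncard_of_injOn (sortPerm b).symm (fun k hk => ?_)
      (sortPerm b).symm.injective.injOn
    have h := sortedAbs_antitone b (Set.mem_Iic.mp hk)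
    rw [sortedAbs_sortPerm, ← Equiv.apply_symm_apply (sortPerm b) k, sortedAbs_sortPerm] at h
    exact abs_pos.mp ((abs_pos.mpr hi).trans_le h)
  rwa [Set.ncard_eq_toFinset_card', Set.toFinset_Iic, Fin.card_Iic] at hle

lemma ncard_abs_lt_le_sortPerm (b : Fin p → ℝ) (i : Fin p) :
    {k | |b i| < |b k|}.ncard ≤ sortPerm b i := by
  have hle : {k | |b i| < |b k|}.ncard ≤ (Set.Iio (sortPerm b i)).ncard := by
    refine Set.ncard_le_ncard_of_injOn (sortPerm b) (fun k hk => ?_) (sortPerm b).injective.injOn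
    rw [Set.mem_Iio, ← not_le]
    intro h
    have := sortedAbs_antitone b h
    simp only [sortedAbs_sortPerm] at this
    exact (not_le.mpr hk) this
  rwa [Set.ncard_eq_toFinset_card' (Set.Iio _), Set.toFinset_Iio, Fin.card_Iio] at hle

lemma sum_apply_update_eq {ι α M : Type*} [Fintype ι] [DecidableEq ι] [AddCommGroup M]
    (φ : ι → α → M) (b : ι → α) (i : ι) (a : α) :
    ∑ k, φ k (update b i a k) = ∑ k, φ k (b k) + (φ i a - φ i (b i)) := by
  rw [← sub_eq_iff_eq_add', ← Finset.sum_sub_distrib, Finset.sum_eq_single i]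
  · simp
  · intro k _ hk
    simp [hk]
  · simp

noncomputable def scalarCost (δ η μ x : ℝ) : ℝ := 1 / 2 * (η - δ * x) ^ 2 + μ * |x|

lemma scalarCost_half_lt {δ η μ x : ℝ} (hδ : 0 < δ) (hx : x ≠ 0) (h : δ * |η| ≤ μ) :
    scalarCost δ η μ (x / 2) < scalarCost δ η μ x := by
  have hcross : δ * η * x ≤ μ * |x| :=
    calc δ * η * x ≤ |δ * η * x| := le_abs_self _
      _ = δ * |η| * |x| := by rw [abs_mul, abs_mul, abs_of_pos hδ]
      _ ≤ μ * |x| := mul_le_mul_of_nonneg_right h (abs_nonneg x)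
  have hquad : 0 < δ ^ 2 * x ^ 2 := by positivity
  rw [scalarCost, scalarCost, abs_div, abs_two]
  nlinarith

lemma scalarCost_lt_scalarCost_zero {δ η μ t : ℝ} (ht : 0 < t)
    (hsmall : δ ^ 2 * t < 2 * (δ * |η| - μ)) :
    scalarCost δ η μ (if 0 ≤ η then t else -t) < scalarCost δ η μ 0 := by
  have := mul_lt_mul_of_pos_left hsmall ht
  unfold scalarCost
  split_ifs with hη
  · rw [abs_of_nonneg hη, abs_of_pos ht] at *
    nlinarith
  · rw [abs_of_neg (not_le.mp hη), abs_neg, abs_of_pos ht] at *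
    nlinarith

variable {d y lam : Fin p → ℝ}

lemma slopeObj_eq_sum_scalarCost (b : Fin p → ℝ) :
    slopeObj d y lam b = ∑ k, scalarCost (d k) (y k) (lam (sortPerm b k)) (b k) := by
  simp only [slopeObj, scalarCost, Jlam_eq_sum_sortPerm, Finset.sum_add_distrib, Finset.mul_sum]

lemma sum_scalarCost_le_slopeObj (hlam : Antitone lam) (b : Fin p → ℝ)
    (τ : Equiv.Perm (Fin p)) :
    ∑ k, scalarCost (d k) (y k) (lam (τ k)) (b k) ≤ slopeObj d y lam b := by
  simp only [slopeObj, scalarCost, Finset.sum_add_distrib, Finset.mul_sum]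
  linarith [sum_perm_mul_abs_le_Jlam hlam b τ]

lemma slopeObj_update_le (hlam : Antitone lam) (b : Fin p → ℝ) (i : Fin p) (a : ℝ) :
    slopeObj d y lam (update b i a) ≤ slopeObj d y lam b
      + scalarCost (d i) (y i) (lam (sortPerm (update b i a) i)) a
      - scalarCost (d i) (y i) (lam (sortPerm (update b i a) i)) (b i) := by
  rw [slopeObj_eq_sum_scalarCost, sum_apply_update_eq
    (fun k x => scalarCost (d k) (y k) (lam (sortPerm (update b i a) k)) x)]
  linarith [sum_scalarCost_le_slopeObj (d := d) (y := y) hlam b (sortPerm (update b i a))]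

variable {b : Fin p → ℝ}

lemma scalarCost_le_of_minimizer (hlam : Antitone lam)
    (hmin : ∀ b', slopeObj d y lam b ≤ slopeObj d y lam b') (i : Fin p) (a : ℝ) :
    scalarCost (d i) (y i) (lam (sortPerm (update b i a) i)) (b i)
      ≤ scalarCost (d i) (y i) (lam (sortPerm (update b i a) i)) a := by
  linarith [slopeObj_update_le (d := d) (y := y) hlam b i a, hmin (update b i a)]

lemma lam_lt_of_minimizer_ne_zero {i : Fin p} (hd : 0 < d i) (hlam : Antitone lam)
    (hmin : ∀ b', slopeObj d y lam b ≤ slopeObj d y lam b') (hbi : b i ≠ 0) {j : Fin p}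
    (hj : (support b).ncard ≤ j + 1) : lam j < d i * |y i| := by
  by_contra! h
  set b' := update b i (b i / 2)
  have hsupp : support b' = support b := by
    ext k
    rcases eq_or_ne k i with rfl | hk
    · simp [b', hbi]
    · simp [b', hk]
  have hrank : (sortPerm b' i : ℕ) < (support b).ncard :=
    hsupp ▸ sortPerm_lt_ncard_support (by simpa [b'] using hbi)
  have hμ : lam j ≤ lam (sortPerm b' i) := hlam (Fin.le_iff_val_le_val.2 (by omega))
  exact (scalarCost_le_of_minimizer hlam hmin i (b i / 2)).not_gt
    (scalarCost_half_lt hd hbi (h.trans hμ))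

lemma le_lam_of_minimizer_eq_zero {i : Fin p} (hlam : Antitone lam)
    (hmin : ∀ b', slopeObj d y lam b ≤ slopeObj d y lam b') (hbi : b i = 0) {j : Fin p}
    (hj : (j : ℕ) ≤ (support b).ncard) : d i * |y i| ≤ lam j := by
  by_contra! h
  have hpos : ∀ᶠ t in 𝓝[>] (0 : ℝ), 0 < t := self_mem_nhdsWithin
  have hsmall : ∀ᶠ t in 𝓝[>] (0 : ℝ), d i ^ 2 * t < 2 * (d i * |y i| - lam j) :=
    nhdsWithin_le_nhds <| ((continuous_const.mul continuous_id).tendsto' 0 0 (by simp))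
      |>.eventually_lt_const (by linarith)
  have hbelow : ∀ᶠ t in 𝓝[>] (0 : ℝ), ∀ k ∈ support b, t < |b k| :=
    nhdsWithin_le_nhds <| (eventually_all_finite (Set.toFinite _)).2 fun k hk =>
      eventually_lt_nhds (abs_pos.2 hk)
  obtain ⟨t, ht, htsmall, htb⟩ := (hpos.and (hsmall.and hbelow)).exists
  set a := if 0 ≤ y i then t else -t
  have ha : |a| = t := by
    simp only [a]
    split_ifs <;> simp [abs_of_pos ht]
  set b' := update b i a
  have hμ : lam (sortPerm b' i) ≤ lam j := by
    have hsub : support b ⊆ {k | |b' i| < |b' k|} := fun k hk => by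
      have hki : k ≠ i := fun h => hk (h ▸ hbi)
      simp [b', update_of_ne hki, ha, htb k hk]
    have := (Set.ncard_le_ncard hsub).trans (ncard_abs_lt_le_sortPerm b' i)
    exact hlam (Fin.le_iff_val_le_val.2 (by omega))
  have hopt := scalarCost_le_of_minimizer hlam hmin i a
  rw [hbi] at hopt
  exact hopt.not_gt (scalarCost_lt_scalarCost_zero ht (by linarith))

end Slope

open Slope

/-- `r : Fin p` is `0`-indexed: the support size `r + 1` and the weight `lam r` are the paper's
`r` and `λ_r`. -/
theorem slope_selected_iff_threshold_general {p : ℕ} (d lam : Fin p → ℝ)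
    (hd : ∀ i, 0 < d i)
    (hlam_anti : ∀ i j : Fin p, i ≤ j → lam j ≤ lam i)
    (bstar : (Fin p → ℝ) → (Fin p → ℝ))
    (hbstar : ∀ y b, slopeObj d y lam (bstar y) ≤ slopeObj d y lam b)
    (i : Fin p) (r : Fin p) :
    {y : Fin p → ℝ | bstar y i ≠ 0 ∧ {k : Fin p | bstar y k ≠ 0}.ncard = (r : ℕ) + 1} =
    {y : Fin p → ℝ | lam r < d i * |y i| ∧
      {k : Fin p | bstar y k ≠ 0}.ncard = (r : ℕ) + 1} := by
  have hlam : Antitone lam := fun a b hab => hlam_anti a b hab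
  ext y
  constructor
  · rintro ⟨hbi, hR⟩
    exact ⟨lam_lt_of_minimizer_ne_zero (hd i) hlam (hbstar y) hbi hR.le, hR⟩
  · rintro ⟨hthr, hR⟩
    refine ⟨fun hbi => ?_, hR⟩
    have hle := le_lam_of_minimizer_eq_zero hlam (hbstar y) hbi ((Nat.le_succ _).trans hR.ge)
    exact hle.not_gt hthr

/-- Lemma 2 of the appendix.  For the diagonal SLOPE problem, denote by `b*(y)` the unique
minimizer and by `R(b*(y))` its number of nonzero entries.  For every index `i` and every
`r ≥ 1` (encoded as `r : Fin p`, representing the 1-indexed value `r+1 ≥ 1`; the condition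
`R = r` forces `r ≤ p`), the set of `y` with `(b*(y))_i ≠ 0` and `R(b*(y)) = r` equals the set
of `y` with `d_i |y_i| > λ_r` and `R(b*(y)) = r`. -/
theorem slope_selected_iff_threshold {p : ℕ} (d lam : Fin p → ℝ)
    (hd : ∀ i, 0 < d i)
    (hlam_anti : ∀ i j : Fin p, i ≤ j → lam j ≤ lam i)
    (hlam_nonneg : ∀ i, 0 ≤ lam i)
    (bstar : (Fin p → ℝ) → (Fin p → ℝ))
    (hbstar : ∀ y b, slopeObj d y lam (bstar y) ≤ slopeObj d y lam b)
    (i : Fin p) (r : Fin p) :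
    {y : Fin p → ℝ | bstar y i ≠ 0 ∧ {k : Fin p | bstar y k ≠ 0}.ncard = (r : ℕ) + 1} =
    {y : Fin p → ℝ | lam r < d i * |y i| ∧
      {k : Fin p | bstar y k ≠ 0}.ncard = (r : ℕ) + 1} :=
  slope_selected_iff_threshold_general d lam hd hlam_anti bstar hbstar i r
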